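/- For every κ ≥ 1, p ∈ (0,1) and Y_M > 0 there exist constants a, b (depending only on κ, p, Y_M) with the following property: for every connected d-regular restricted-growth graph G with growth constant κ on n vertices, every 3-net clustering of G, cluster randomization with parameter p, any one of the exposure conditions full neighborhood, absolute k-neighborhood, or fractional q-neighborhood, and any response functions constant on each exposure event with values in [0, Y_M], the Horvitz–Thompson estimator satisfies Var[τ̂(Z)] ≤ (a + b·d)/n, i.e., the variance is upper bounded by a function linear in the degree d. -/

import Mathlib

open Finset
open scoped Classical

noncomputable section

/-- Probability weight of a coin vector of independent Bernoulli(p) cluster coins. -/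
def coinWt (p : ℝ) {J : Type*} [Fintype J] (x : J → Bool) : ℝ :=
  ∏ j, if x j then p else 1 - p

/-- Probability of an event `A` of assignment vectors under cluster randomization
with cluster map `c` and parameter `p`. -/
def clusterPr {V : Type*} [Fintype V] {J : Type*} [Fintype J]
    (p : ℝ) (c : V → J) (A : Set (V → Bool)) : ℝ :=
  ∑ x : J → Bool, coinWt p x * (if (fun v => x (c v)) ∈ A then 1 else 0)

/-- The Horvitz–Thompson estimator. -/
def htEst {V : Type*} [Fintype V] (pr : Set (V → Bool) → ℝ)
    (σ1 σ0 : V → Set (V → Bool)) (Y : V → (V → Bool) → ℝ) (z : V → Bool) : ℝ :=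
  (Fintype.card V : ℝ)⁻¹ *
    ∑ i : V, ((if z ∈ σ1 i then Y i z else 0) / pr (σ1 i)
      - (if z ∈ σ0 i then Y i z else 0) / pr (σ0 i))

/-- Variance of the Horvitz–Thompson estimator under cluster randomization. -/
def clusterVar {V : Type*} [Fintype V] {J : Type*} [Fintype J]
    (p : ℝ) (c : V → J) (σ1 σ0 : V → Set (V → Bool)) (Y : V → (V → Bool) → ℝ) : ℝ :=
  (∑ x : J → Bool, coinWt p x *
      (htEst (clusterPr p c) σ1 σ0 Y (fun v => x (c v))) ^ 2)
  - (∑ x : J → Bool, coinWt p x *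
      htEst (clusterPr p c) σ1 σ0 Y (fun v => x (c v))) ^ 2

/-- Full neighborhood exposure to condition `b`. -/
def fullExp {V : Type*} [Fintype V] (G : SimpleGraph V) (b : Bool) (v : V) :
    Set (V → Bool) :=
  {z | z v = b ∧ ∀ u ∈ G.neighborFinset v, z u = b}

/-- Absolute `k`-neighborhood exposure to condition `b`. -/
def absExp {V : Type*} [Fintype V] (G : SimpleGraph V) (k : ℕ) (b : Bool) (v : V) :
    Set (V → Bool) :=
  {z | z v = b ∧ min k (G.degree v) ≤ ((G.neighborFinset v).filter (fun u => z u = b)).card}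

/-- Fractional `q`-neighborhood exposure to condition `b`. -/
def fracExp {V : Type*} [Fintype V] (G : SimpleGraph V) (q : ℝ) (b : Bool) (v : V) :
    Set (V → Bool) :=
  {z | z v = b ∧
    q * (G.degree v : ℝ) ≤ (((G.neighborFinset v).filter (fun u => z u = b)).card : ℝ)}

/-- The ball of radius `r` around `v`: vertices reachable from `v` within
graph distance `r`. -/
def gball {V : Type*} [Fintype V] (G : SimpleGraph V) (v : V) (r : ℕ) : Finset V :=
  Finset.univ.filter (fun u => G.Reachable v u ∧ G.dist v u ≤ r)

/-!
The estimator is `n⁻¹ ∑ᵢ tᵢ`, where `tᵢ` depends only on the coins of the clusters met by the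
closed neighbourhood of `i`. The centers of those clusters lie within distance 3 of `i` and their
unit balls are disjoint subsets of `B₄(i)`, so there are at most `κ³` of them. Hence every exposure
probability is at least `min(p, 1 - p)^⌊κ³⌋`, which bounds `|tᵢ|` by a constant `M`. Terms whose
cluster sets are disjoint are independent, and this can only fail for `j ∈ B₆(i)`, a ball of at
most `κ⁵ (d + 1)` vertices; so the variance is at most `n⁻² · n · κ⁵ (d + 1) · 2M²`.
-/

section CoinFlips

variable {J : Type*} [Fintype J] {p : ℝ}

def coinMean (p : ℝ) (f : (J → Bool) → ℝ) : ℝ :=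
  ∑ x, coinWt p x * f x

def coinCov (p : ℝ) (f g : (J → Bool) → ℝ) : ℝ :=
  coinMean p (fun x => f x * g x) - coinMean p f * coinMean p g

lemma coinWt_nonneg (hp : p ∈ Set.Icc (0 : ℝ) 1) (x : J → Bool) : 0 ≤ coinWt p x :=
  prod_nonneg fun j _ => by cases x j <;> simp [hp.1, hp.2]

lemma sum_coinWt (p : ℝ) : ∑ x : J → Bool, coinWt p x = 1 := by
  simpa [coinWt] using (Fintype.prod_sum fun (_ : J) (b : Bool) => if b then p else 1 - p).symm

lemma coinMean_le (hp : p ∈ Set.Icc (0 : ℝ) 1) {f : (J → Bool) → ℝ} {a : ℝ}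
    (h : ∀ x, f x ≤ a) : coinMean p f ≤ a :=
  calc coinMean p f ≤ ∑ x, coinWt p x * a :=
        sum_le_sum fun x _ => mul_le_mul_of_nonneg_left (h x) (coinWt_nonneg hp x)
    _ = a := by rw [← sum_mul, sum_coinWt, one_mul]

lemma abs_coinMean_le (hp : p ∈ Set.Icc (0 : ℝ) 1) {f : (J → Bool) → ℝ} {a : ℝ}
    (h : ∀ x, |f x| ≤ a) : |coinMean p f| ≤ a := by
  have hneg : coinMean p (fun x => -f x) = -coinMean p f := by
    simp [coinMean, sum_neg_distrib]
  refine abs_le.mpr ⟨?_, coinMean_le hp fun x => (abs_le.mp (h x)).2⟩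
  have := coinMean_le hp fun x => neg_le.mpr (abs_le.mp (h x)).1
  linarith

lemma coinCov_le (hp : p ∈ Set.Icc (0 : ℝ) 1) {f g : (J → Bool) → ℝ} {M : ℝ}
    (hf : ∀ x, |f x| ≤ M) (hg : ∀ x, |g x| ≤ M) : coinCov p f g ≤ 2 * M ^ 2 := by
  have hM : 0 ≤ M := (abs_nonneg _).trans (hf (fun _ => false))
  have hfg : coinMean p (fun x => f x * g x) ≤ M ^ 2 := coinMean_le hp fun x =>
    calc f x * g x ≤ |f x| * |g x| := by rw [← abs_mul]; exact le_abs_self _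
      _ ≤ M ^ 2 := by rw [sq]; exact mul_le_mul (hf x) (hg x) (abs_nonneg _) hM
  have hprod : |coinMean p f * coinMean p g| ≤ M ^ 2 := by
    rw [abs_mul, sq]
    exact mul_le_mul (abs_coinMean_le hp hf) (abs_coinMean_le hp hg) (abs_nonneg _) hM
  unfold coinCov
  linarith [neg_abs_le (coinMean p f * coinMean p g)]

lemma coinWt_piecewise_mul (p : ℝ) (S : Finset J) (x y : J → Bool) :
    coinWt p (S.piecewise x y) * coinWt p (S.piecewise y x) = coinWt p x * coinWt p y := by
  simp only [coinWt, ← prod_mul_distrib]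
  refine prod_congr rfl fun j _ => ?_
  by_cases hj : j ∈ S <;> simp [Finset.piecewise, hj, mul_comm]

omit [Fintype J] in
lemma piecewise_swap_involutive (S : Finset J) :
    Function.Involutive fun z : (J → Bool) × (J → Bool) =>
      (S.piecewise z.1 z.2, S.piecewise z.2 z.1) := by
  rintro ⟨x, y⟩
  ext j <;> by_cases hj : j ∈ S <;> simp [Finset.piecewise, hj]

/-- Swapping the coins outside `S` between two independent coin vectors preserves their joint
weight, and turns `f x * g y` into `f x * g x`. -/
lemma coinCov_eq_zero_of_disjoint (p : ℝ) (S : Finset J) {f g : (J → Bool) → ℝ}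
    (hf : ∀ x y, (∀ j ∈ S, x j = y j) → f x = f y)
    (hg : ∀ x y, (∀ j ∉ S, x j = y j) → g x = g y) : coinCov p f g = 0 := by
  set σ := (piecewise_swap_involutive S).toPerm
  have hfS : ∀ x y, f (S.piecewise x y) = f x := fun x y =>
    hf _ _ fun j hj => by simp [hj]
  have hgS : ∀ x y, g (S.piecewise x y) = g y := fun x y =>
    hg _ _ fun j hj => by simp [hj]
  have key : coinMean p f * coinMean p g = coinMean p (fun x => f x * g x) := calc
    coinMean p f * coinMean p g
        = ∑ z : (J → Bool) × (J → Bool), coinWt p z.1 * coinWt p z.2 * (f z.1 * g z.2) := by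
      rw [coinMean, coinMean, sum_mul_sum, ← Fintype.sum_prod_type']
      exact sum_congr rfl fun z _ => by ring
    _ = ∑ z : (J → Bool) × (J → Bool), coinWt p (σ z).1 * coinWt p (σ z).2 *
          (f (σ z).1 * g (σ z).1) := by
      refine sum_congr rfl fun z _ => ?_
      simp only [σ, Function.Involutive.coe_toPerm, coinWt_piecewise_mul, hfS, hgS]
    _ = ∑ z : (J → Bool) × (J → Bool), coinWt p z.1 * coinWt p z.2 * (f z.1 * g z.1) :=
      Equiv.sum_comp σ fun z : (J → Bool) × (J → Bool) =>
        coinWt p z.1 * coinWt p z.2 * (f z.1 * g z.1)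
    _ = coinMean p (fun x => f x * g x) := by
      rw [Fintype.sum_prod_type, coinMean]
      refine sum_congr rfl fun x _ => ?_
      simp only [mul_right_comm _ (coinWt p _), ← mul_sum, sum_coinWt, mul_one]
  rw [coinCov, key, sub_self]

lemma coinMean_forall_eq (p : ℝ) (S : Finset J) (b : Bool) :
    coinMean p (fun x => if ∀ j ∈ S, x j = b then 1 else 0) =
      (if b then p else 1 - p) ^ S.card := by
  have hterm : ∀ x : J → Bool, coinWt p x * (if ∀ j ∈ S, x j = b then 1 else 0) =
      ∏ j, (if x j then p else 1 - p) * (if j ∈ S then (if x j = b then 1 else 0) else 1) := by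
    intro x
    rw [prod_mul_distrib, prod_ite_mem, univ_inter, prod_boole, coinWt]
    congr
  have hfactor : ∀ j, ∑ c : Bool, (if c then p else 1 - p) *
      (if j ∈ S then (if c = b then 1 else 0) else 1) =
        if j ∈ S then (if b then p else 1 - p) else 1 := by
    intro j
    by_cases hj : j ∈ S <;> cases b <;> simp [hj]
  rw [coinMean, sum_congr rfl fun x _ => hterm x, ← Fintype.prod_sum fun j c =>
    (if c then p else 1 - p) * (if j ∈ S then (if c = b then 1 else 0) else 1),
    prod_congr rfl fun j _ => hfactor j, prod_ite_mem, univ_inter, prod_const]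

lemma coinMean_sum {ι : Type*} (s : Finset ι) (f : ι → (J → Bool) → ℝ) :
    coinMean p (fun x => ∑ i ∈ s, f i x) = ∑ i ∈ s, coinMean p (f i) := by
  simp only [coinMean, mul_sum]
  exact sum_comm

lemma coinMean_const_mul (a : ℝ) (f : (J → Bool) → ℝ) :
    coinMean p (fun x => a * f x) = a * coinMean p f := by
  simp only [coinMean, mul_sum, mul_left_comm a]

lemma coinCov_const_mul_sum {ι : Type*} [Fintype ι] (a : ℝ) (t : ι → (J → Bool) → ℝ) :
    coinCov p (fun x => a * ∑ i, t i x) (fun x => a * ∑ i, t i x) =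
      a ^ 2 * ∑ i, ∑ i', coinCov p (t i) (t i') := by
  have hsq : ∀ x, (a * ∑ i, t i x) * (a * ∑ i, t i x) = a ^ 2 * ∑ i, ∑ i', t i x * t i' x := by
    intro x
    rw [← sum_mul_sum]
    ring
  simp only [coinCov, hsq, coinMean_const_mul, coinMean_sum]
  rw [mul_mul_mul_comm, ← sq, sum_mul_sum, ← mul_sub, ← sum_sub_distrib]
  simp only [sum_sub_distrib]

lemma sum_coinCov_le {ι : Type*} [Fintype ι] (hp : p ∈ Set.Icc (0 : ℝ) 1)
    (t : ι → (J → Bool) → ℝ) (S : ι → Finset J)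
    (hdep : ∀ i x y, (∀ j ∈ S i, x j = y j) → t i x = t i y)
    {M : ℝ} (hbd : ∀ i x, |t i x| ≤ M) (D : ι → Finset ι)
    (hD : ∀ i i', ¬Disjoint (S i) (S i') → i' ∈ D i) {C : ℝ} (hC : ∀ i, ((D i).card : ℝ) ≤ C) :
    ∑ i, ∑ i', coinCov p (t i) (t i') ≤ Fintype.card ι * (C * (2 * M ^ 2)) := by
  have hrow : ∀ i, ∑ i', coinCov p (t i) (t i') ≤ C * (2 * M ^ 2) := by
    intro i
    have hzero : ∀ i' ∉ D i, coinCov p (t i) (t i') = 0 := fun i' hi' =>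
      coinCov_eq_zero_of_disjoint p (S i) (hdep i) fun x y h => hdep i' x y fun j hj =>
        h j (disjoint_right.mp (not_not.mp (mt (hD i i') hi')) hj)
    calc ∑ i', coinCov p (t i) (t i') = ∑ i' ∈ D i, coinCov p (t i) (t i') :=
          (sum_subset (subset_univ _) fun i' _ hi' => hzero i' hi').symm
      _ ≤ ∑ _i' ∈ D i, 2 * M ^ 2 := sum_le_sum fun i' _ => coinCov_le hp (hbd i) (hbd i')
      _ = (D i).card * (2 * M ^ 2) := by rw [sum_const, nsmul_eq_mul]
      _ ≤ C * (2 * M ^ 2) := mul_le_mul_of_nonneg_right (hC i) (by positivity)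
  calc ∑ i, ∑ i', coinCov p (t i) (t i') ≤ ∑ _i : ι, C * (2 * M ^ 2) := sum_le_sum fun i _ => hrow i
    _ = Fintype.card ι * (C * (2 * M ^ 2)) := by rw [sum_const, card_univ, nsmul_eq_mul]

end CoinFlips

section Cluster

variable {V J : Type*} [Fintype V] [Fintype J] {p : ℝ}

lemma pow_le_clusterPr (hp : p ∈ Set.Icc (0 : ℝ) 1) (c : V → J) {A : Set (V → Bool)}
    (S : Finset J) (b : Bool) (hA : ∀ x : J → Bool, (∀ j ∈ S, x j = b) → (fun v => x (c v)) ∈ A) :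
    (if b then p else 1 - p) ^ S.card ≤ clusterPr p c A := by
  rw [← coinMean_forall_eq]
  refine sum_le_sum fun x _ => mul_le_mul_of_nonneg_left ?_ (coinWt_nonneg hp x)
  by_cases hx : ∀ j ∈ S, x j = b
  · simp only [if_pos hx, if_pos (hA x hx), le_refl]
  · simp only [if_neg hx]
    split_ifs <;> norm_num

def htTerm (p : ℝ) (c : V → J) (σ1 σ0 : V → Set (V → Bool)) (Y : V → (V → Bool) → ℝ)
    (i : V) (x : J → Bool) : ℝ :=
  (if (fun v => x (c v)) ∈ σ1 i then Y i (fun v => x (c v)) else 0) / clusterPr p c (σ1 i)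
    - (if (fun v => x (c v)) ∈ σ0 i then Y i (fun v => x (c v)) else 0) / clusterPr p c (σ0 i)

lemma clusterVar_eq_sum_coinCov (p : ℝ) (c : V → J) (σ1 σ0 : V → Set (V → Bool))
    (Y : V → (V → Bool) → ℝ) :
    clusterVar p c σ1 σ0 Y = ((Fintype.card V : ℝ)⁻¹) ^ 2 *
      ∑ i, ∑ i', coinCov p (htTerm p c σ1 σ0 Y i) (htTerm p c σ1 σ0 Y i') := by
  rw [← coinCov_const_mul_sum]
  simp only [clusterVar, coinCov, coinMean, sq]
  rfl

lemma abs_htTerm_le {σ1 σ0 : V → Set (V → Bool)} {Y : V → (V → Bool) → ℝ} {YM : ℝ}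
    (hYM : 0 ≤ YM) (hYb : ∀ i, ∀ z ∈ σ1 i ∪ σ0 i, Y i z ∈ Set.Icc (0 : ℝ) YM)
    (c : V → J) {P1 P0 : ℝ} (hP1 : 0 < P1) (hP0 : 0 < P0)
    (hσ1 : ∀ i, P1 ≤ clusterPr p c (σ1 i)) (hσ0 : ∀ i, P0 ≤ clusterPr p c (σ0 i))
    (i : V) (x : J → Bool) : |htTerm p c σ1 σ0 Y i x| ≤ YM / P1 + YM / P0 := by
  have hbound : ∀ (A : Set (V → Bool)) (P : ℝ), 0 < P → P ≤ clusterPr p c A →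
      (∀ z ∈ A, Y i z ∈ Set.Icc (0 : ℝ) YM) → ∀ z,
      0 ≤ (if z ∈ A then Y i z else 0) / clusterPr p c A ∧
        (if z ∈ A then Y i z else 0) / clusterPr p c A ≤ YM / P := by
    intro A P hP hPA hY z
    have hA : 0 < clusterPr p c A := hP.trans_le hPA
    by_cases hz : z ∈ A
    · simp only [hz, if_true]
      exact ⟨div_nonneg (hY z hz).1 hA.le, div_le_div₀ hYM (hY z hz).2 hP hPA⟩
    · simp [hz, div_nonneg hYM hP.le]
  obtain ⟨h1lo, h1hi⟩ := hbound _ _ hP1 (hσ1 i) (fun z hz => hYb i z (Or.inl hz)) fun v => x (c v)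
  obtain ⟨h0lo, h0hi⟩ := hbound _ _ hP0 (hσ0 i) (fun z hz => hYb i z (Or.inr hz)) fun v => x (c v)
  rw [htTerm, abs_le]
  constructor <;> linarith

structure IsClusterLocal (c : V → J) (S : V → Finset J) (b : Bool) (σ : V → Set (V → Bool)) :
    Prop where
  mem_congr : ∀ i (x y : J → Bool), (∀ j ∈ S i, x j = y j) →
    ((fun v => x (c v)) ∈ σ i ↔ (fun v => y (c v)) ∈ σ i)
  mem_of_forall_eq : ∀ i (x : J → Bool), (∀ j ∈ S i, x j = b) → (fun v => x (c v)) ∈ σ i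

lemma htTerm_congr {c : V → J} {S : V → Finset J} {σ1 σ0 : V → Set (V → Bool)}
    (hσ1 : IsClusterLocal c S true σ1) (hσ0 : IsClusterLocal c S false σ0)
    {Y : V → (V → Bool) → ℝ} (hY1 : ∀ i, ∀ z ∈ σ1 i, ∀ z' ∈ σ1 i, Y i z = Y i z')
    (hY0 : ∀ i, ∀ z ∈ σ0 i, ∀ z' ∈ σ0 i, Y i z = Y i z') (i : V) (x y : J → Bool)
    (hxy : ∀ j ∈ S i, x j = y j) : htTerm p c σ1 σ0 Y i x = htTerm p c σ1 σ0 Y i y := by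
  have hite : ∀ A : Set (V → Bool), (∀ z ∈ A, ∀ z' ∈ A, Y i z = Y i z') →
      ((fun v => x (c v)) ∈ A ↔ (fun v => y (c v)) ∈ A) →
      (if (fun v => x (c v)) ∈ A then Y i (fun v => x (c v)) else 0) =
        (if (fun v => y (c v)) ∈ A then Y i (fun v => y (c v)) else 0) := by
    intro A hY hiff
    by_cases hx : (fun v => x (c v)) ∈ A
    · rw [if_pos hx, if_pos (hiff.mp hx), hY _ hx _ (hiff.mp hx)]
    · rw [if_neg hx, if_neg (mt hiff.mpr hx)]
  rw [htTerm, htTerm, hite _ (hY1 i) (hσ1.mem_congr i x y hxy),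
    hite _ (hY0 i) (hσ0.mem_congr i x y hxy)]

theorem clusterVar_le_of_isClusterLocal (hp : p ∈ Set.Ioo (0 : ℝ) 1) {c : V → J}
    {S : V → Finset J} {N : ℕ} (hSN : ∀ i, (S i).card ≤ N) {σ1 σ0 : V → Set (V → Bool)}
    (hσ1 : IsClusterLocal c S true σ1) (hσ0 : IsClusterLocal c S false σ0)
    {Y : V → (V → Bool) → ℝ} {YM : ℝ} (hYM : 0 ≤ YM)
    (hY1 : ∀ i, ∀ z ∈ σ1 i, ∀ z' ∈ σ1 i, Y i z = Y i z')
    (hY0 : ∀ i, ∀ z ∈ σ0 i, ∀ z' ∈ σ0 i, Y i z = Y i z')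
    (hYb : ∀ i, ∀ z ∈ σ1 i ∪ σ0 i, Y i z ∈ Set.Icc (0 : ℝ) YM)
    (D : V → Finset V) (hD : ∀ i i', ¬Disjoint (S i) (S i') → i' ∈ D i)
    {C : ℝ} (hC : ∀ i, ((D i).card : ℝ) ≤ C) :
    clusterVar p c σ1 σ0 Y ≤
      (Fintype.card V : ℝ)⁻¹ * (C * (2 * (YM / p ^ N + YM / (1 - p) ^ N) ^ 2)) := by
  obtain ⟨hp0, hp1⟩ := hp
  have hpIcc : p ∈ Set.Icc (0 : ℝ) 1 := ⟨hp0.le, hp1.le⟩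
  have hw : ∀ b : Bool, (if b then p else 1 - p) ∈ Set.Icc (0 : ℝ) 1 := by
    intro b
    cases b <;> simp only [Bool.false_eq_true, if_false, if_true, Set.mem_Icc] <;>
      constructor <;> linarith
  have hPr : ∀ (b : Bool) (σ : V → Set (V → Bool)), IsClusterLocal c S b σ →
      ∀ i, (if b then p else 1 - p) ^ N ≤ clusterPr p c (σ i) := fun b σ hσ i =>
    (pow_le_pow_of_le_one (hw b).1 (hw b).2 (hSN i)).trans
      (pow_le_clusterPr hpIcc c (S i) b (hσ.mem_of_forall_eq i))
  have hsum := sum_coinCov_le hpIcc (htTerm p c σ1 σ0 Y) S (htTerm_congr hσ1 hσ0 hY1 hY0)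
    (abs_htTerm_le hYM hYb c (pow_pos hp0 N) (pow_pos (sub_pos.mpr hp1) N)
      (hPr true σ1 hσ1) (hPr false σ0 hσ0)) D hD hC
  rcases (Fintype.card V).eq_zero_or_pos with hn | hn
  · simp [clusterVar_eq_sum_coinCov, hn]
  rw [clusterVar_eq_sum_coinCov, sq, mul_assoc]
  refine mul_le_mul_of_nonneg_left ?_ (by positivity)
  rwa [inv_mul_le_iff₀ (Nat.cast_pos.mpr hn)]

end Cluster

namespace SimpleGraph

variable {V : Type*} [Fintype V] {G : SimpleGraph V}

lemma gball_one (G : SimpleGraph V) (v : V) : gball G v 1 = insert v (G.neighborFinset v) := by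
  ext u
  simp only [gball, mem_filter, mem_univ, true_and, mem_insert, mem_neighborFinset]
  constructor
  · rintro ⟨hr, h⟩
    rcases Nat.le_one_iff_eq_zero_or_eq_one.mp h with h0 | h1
    · exact Or.inl (hr.dist_eq_zero_iff.mp h0).symm
    · exact Or.inr (dist_eq_one_iff_adj.mp h1)
  · rintro (rfl | ha)
    · simp
    · exact ⟨ha.reachable, (dist_eq_one_iff_adj.mpr ha).le⟩

lemma mem_gball (hG : G.Connected) {v u : V} {r : ℕ} : u ∈ gball G v r ↔ G.dist v u ≤ r := by
  simp [gball, hG.preconnected v u]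

lemma card_gball_one {d : ℕ} (hreg : ∀ v, G.degree v = d) (v : V) : (gball G v 1).card = d + 1 := by
  rw [gball_one, card_insert_of_notMem (notMem_neighborFinset_self G v),
    card_neighborFinset_eq_degree, hreg v]

lemma card_gball_le_pow {κ : ℝ} (hκ : 0 ≤ κ)
    (hgrow : ∀ (v : V) (r : ℕ), 1 ≤ r → ((gball G v (r + 1)).card : ℝ) ≤ κ * (gball G v r).card)
    (v : V) (s : ℕ) : ((gball G v (s + 1)).card : ℝ) ≤ κ ^ s * (gball G v 1).card := by
  induction s with
  | zero => simp
  | succ s ih =>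
    calc ((gball G v (s + 1 + 1)).card : ℝ) ≤ κ * (gball G v (s + 1)).card := hgrow v _ le_add_self
      _ ≤ κ * (κ ^ s * (gball G v 1).card) := mul_le_mul_of_nonneg_left ih hκ
      _ = κ ^ (s + 1) * (gball G v 1).card := by ring

end SimpleGraph

section ThreeNet

open SimpleGraph

variable {V J : Type*} [Fintype V] {G : SimpleGraph V} {vc : J → V} {asg : V → J}

def nbhdClusters (G : SimpleGraph V) (asg : V → J) (i : V) : Finset J :=
  (gball G i 1).image asg

lemma dist_center_le_three (hG : G.Connected) (hclose : ∀ w, G.dist (vc (asg w)) w ≤ 2)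
    {i : V} {j : J} (hj : j ∈ nbhdClusters G asg i) : G.dist i (vc j) ≤ 3 := by
  obtain ⟨v, hv, rfl⟩ := mem_image.mp hj
  calc G.dist i (vc (asg v)) ≤ G.dist i v + G.dist v (vc (asg v)) := hG.dist_triangle
    _ ≤ 1 + 2 := add_le_add ((mem_gball hG).mp hv) (by rw [dist_comm]; exact hclose v)

lemma dist_le_six_of_not_disjoint (hG : G.Connected) (hclose : ∀ w, G.dist (vc (asg w)) w ≤ 2)
    {i i' : V} (h : ¬Disjoint (nbhdClusters G asg i) (nbhdClusters G asg i')) :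
    G.dist i i' ≤ 6 := by
  obtain ⟨j, hj, hj'⟩ := not_disjoint_iff.mp h
  calc G.dist i i' ≤ G.dist i (vc j) + G.dist (vc j) i' := hG.dist_triangle
    _ ≤ 3 + 3 := add_le_add (dist_center_le_three hG hclose hj)
        (by rw [dist_comm]; exact dist_center_le_three hG hclose hj')

lemma card_nbhdClusters_le (hG : G.Connected) {d : ℕ} (hreg : ∀ v, G.degree v = d)
    {κ : ℝ} (hκ : 0 ≤ κ)
    (hgrow : ∀ (v : V) (r : ℕ), 1 ≤ r → ((gball G v (r + 1)).card : ℝ) ≤ κ * (gball G v r).card)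
    (hsep : ∀ j j', j ≠ j' → 3 ≤ G.dist (vc j) (vc j'))
    (hclose : ∀ w, G.dist (vc (asg w)) w ≤ 2) (i : V) :
    ((nbhdClusters G asg i).card : ℝ) ≤ κ ^ 3 := by
  set T := nbhdClusters G asg i
  -- The unit balls around the centers in `T` are disjoint, of size `d + 1`, and lie in `B₄(i)`.
  have hsub : T.biUnion (fun j => gball G (vc j) 1) ⊆ gball G i 4 := by
    intro u hu
    obtain ⟨j, hj, hu⟩ := mem_biUnion.mp hu
    exact (mem_gball hG).mpr <| hG.dist_triangle.trans <|
      add_le_add (dist_center_le_three hG hclose hj) ((mem_gball hG).mp hu)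
  have hdisj : (T : Set J).PairwiseDisjoint (fun j => gball G (vc j) 1) := by
    intro j _ j' _ hne
    refine disjoint_left.mpr fun u hu hu' => ?_
    have h2 : G.dist (vc j) (vc j') ≤ 1 + 1 := hG.dist_triangle.trans <|
      add_le_add ((mem_gball hG).mp hu) (by rw [dist_comm]; exact (mem_gball hG).mp hu')
    have h3 := hsep j j' hne
    omega
  have hcard : (T.biUnion fun j => gball G (vc j) 1).card = T.card * (d + 1) := by
    rw [card_biUnion hdisj, sum_const_nat fun j _ => card_gball_one hreg (vc j)]
  have h4 := card_gball_le_pow hκ hgrow i 3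
  rw [card_gball_one hreg] at h4
  have hle : (T.card : ℝ) * (d + 1) ≤ κ ^ 3 * (d + 1) := by
    calc (T.card : ℝ) * (d + 1) = (T.biUnion fun j => gball G (vc j) 1).card := by
          rw [hcard]; push_cast; rfl
      _ ≤ (gball G i 4).card := by exact_mod_cast card_le_card hsub
      _ ≤ κ ^ 3 * (d + 1) := by exact_mod_cast h4
  exact le_of_mul_le_mul_right hle (by positivity)

lemma isClusterLocal_of_eq_filter {b : Bool} {σ : V → Set (V → Bool)}
    (Q : V → Finset V → Prop)
    (hσ : ∀ i, σ i = {z | z i = b ∧ Q i ((G.neighborFinset i).filter fun u => z u = b)})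
    (hQ : ∀ i, Q i (G.neighborFinset i)) (asg : V → J) :
    IsClusterLocal asg (nbhdClusters G asg) b σ := by
  have hnbr : ∀ {i u}, u ∈ G.neighborFinset i → asg u ∈ nbhdClusters G asg i := fun hu =>
    mem_image_of_mem asg (by simp [gball_one, hu])
  have hself : ∀ i, asg i ∈ nbhdClusters G asg i := fun i =>
    mem_image_of_mem asg (by simp [gball_one])
  constructor
  · intro i x y hxy
    have hfilter : ((G.neighborFinset i).filter fun u => x (asg u) = b) =
        (G.neighborFinset i).filter fun u => y (asg u) = b :=
      filter_congr fun u hu => by rw [hxy _ (hnbr hu)]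
    simp only [hσ, Set.mem_ofPred_eq, hxy _ (hself i), hfilter]
  · intro i x hx
    rw [hσ, Set.mem_ofPred_eq, filter_true_of_mem fun u hu => hx _ (hnbr hu)]
    exact ⟨hx _ (hself i), hQ i⟩

lemma fullExp_isClusterLocal (G : SimpleGraph V) (b : Bool) (asg : V → J) :
    IsClusterLocal asg (nbhdClusters G asg) b (fullExp G b) :=
  isClusterLocal_of_eq_filter (fun i s => s = G.neighborFinset i)
    (fun i => by ext z; simp [fullExp, filter_eq_self]) (fun _ => rfl) asg

lemma absExp_isClusterLocal (G : SimpleGraph V) (k : ℕ) (b : Bool) (asg : V → J) :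
    IsClusterLocal asg (nbhdClusters G asg) b (absExp G k b) :=
  isClusterLocal_of_eq_filter (fun i s => min k (G.degree i) ≤ s.card) (fun _ => rfl)
    (fun i => by simp [card_neighborFinset_eq_degree]) asg

lemma fracExp_isClusterLocal (G : SimpleGraph V) {q : ℝ} (hq : q ≤ 1) (b : Bool) (asg : V → J) :
    IsClusterLocal asg (nbhdClusters G asg) b (fracExp G q b) :=
  isClusterLocal_of_eq_filter (fun i s => q * G.degree i ≤ s.card) (fun _ => rfl)
    (fun i => by
      rw [card_neighborFinset_eq_degree]
      exact mul_le_of_le_one_left (Nat.cast_nonneg _) hq) asg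

theorem clusterVar_le_of_threeNet [Fintype J] (hG : G.Connected) {d : ℕ}
    (hreg : ∀ v, G.degree v = d) {κ : ℝ} (hκ : 0 ≤ κ)
    (hgrow : ∀ (v : V) (r : ℕ), 1 ≤ r → ((gball G v (r + 1)).card : ℝ) ≤ κ * (gball G v r).card)
    (hsep : ∀ j j', j ≠ j' → 3 ≤ G.dist (vc j) (vc j'))
    (hclose : ∀ w, G.dist (vc (asg w)) w ≤ 2) {p : ℝ} (hp : p ∈ Set.Ioo (0 : ℝ) 1)
    {σ1 σ0 : V → Set (V → Bool)} (hσ1 : IsClusterLocal asg (nbhdClusters G asg) true σ1)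
    (hσ0 : IsClusterLocal asg (nbhdClusters G asg) false σ0)
    {Y : V → (V → Bool) → ℝ} {YM : ℝ} (hYM : 0 ≤ YM)
    (hY1 : ∀ i, ∀ z ∈ σ1 i, ∀ z' ∈ σ1 i, Y i z = Y i z')
    (hY0 : ∀ i, ∀ z ∈ σ0 i, ∀ z' ∈ σ0 i, Y i z = Y i z')
    (hYb : ∀ i, ∀ z ∈ σ1 i ∪ σ0 i, Y i z ∈ Set.Icc (0 : ℝ) YM) :
    clusterVar p asg σ1 σ0 Y ≤ (Fintype.card V : ℝ)⁻¹ *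
      (κ ^ 5 * (d + 1) * (2 * (YM / p ^ ⌊κ ^ 3⌋₊ + YM / (1 - p) ^ ⌊κ ^ 3⌋₊) ^ 2)) :=
  clusterVar_le_of_isClusterLocal hp
    (fun i => Nat.le_floor (card_nbhdClusters_le hG hreg hκ hgrow hsep hclose i))
    hσ1 hσ0 hYM hY1 hY0 hYb (fun i => gball G i 6)
    (fun _ _ h => (mem_gball hG).mpr (dist_le_six_of_not_disjoint hG hclose h))
    (fun i => by simpa [card_gball_one hreg] using card_gball_le_pow hκ hgrow i 5)

end ThreeNet

/-- **Linear variance bound for 3-net cluster randomization on restricted-growth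
graphs.**  For every `κ ≥ 1`, `p ∈ (0,1)` and `Y_M > 0` there are constants `a, b`
such that: for every connected `d`-regular restricted-growth graph `G` with growth
constant `κ` on `n` vertices, every 3-net clustering of `G` (centers pairwise at
distance ≥ 3 covering every vertex within distance 2, each vertex assigned to a
nearest center), cluster randomization with parameter `p`, any one of the exposure
conditions (full, absolute `k`-, or fractional `q`-neighborhood), and any
responses constant on each exposure event with values in `[0, Y_M]`, the variance
of the Horvitz–Thompson estimator is at most `(a + b·d)/n`. -/
theorem statement19 (κ : ℝ) (hκ : 1 ≤ κ) (p : ℝ) (hp : p ∈ Set.Ioo (0:ℝ) 1)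
    (YM : ℝ) (hYM : 0 < YM) :
    ∃ a b : ℝ, ∀ (V : Type) [Fintype V] (G : SimpleGraph V), G.Connected →
      ∀ d : ℕ, (∀ v, G.degree v = d) →
      (∀ (v : V) (r : ℕ), 1 ≤ r →
        ((gball G v (r + 1)).card : ℝ) ≤ κ * ((gball G v r).card : ℝ)) →
      ∀ (k : ℕ) (vc : Fin k → V) (asg : V → Fin k),
      (∀ i j : Fin k, i ≠ j → 3 ≤ G.dist (vc i) (vc j)) →
      (∀ w : V, ∃ j, G.dist (vc j) w ≤ 2) →
      (∀ (w : V) (j : Fin k), G.dist (vc (asg w)) w ≤ G.dist (vc j) w) →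
      ∀ σ1 σ0 : V → Set (V → Bool),
      ((σ1 = fullExp G true ∧ σ0 = fullExp G false) ∨
       (∃ kk : ℕ, σ1 = absExp G kk true ∧ σ0 = absExp G kk false) ∨
       (∃ q : ℝ, q ∈ Set.Icc (0:ℝ) 1 ∧ σ1 = fracExp G q true ∧ σ0 = fracExp G q false)) →
      ∀ Y : V → (V → Bool) → ℝ,
      (∀ i, ∀ z ∈ σ1 i, ∀ z' ∈ σ1 i, Y i z = Y i z') →
      (∀ i, ∀ z ∈ σ0 i, ∀ z' ∈ σ0 i, Y i z = Y i z') →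
      (∀ i, ∀ z ∈ σ1 i ∪ σ0 i, Y i z ∈ Set.Icc (0:ℝ) YM) →
      clusterVar p asg σ1 σ0 Y ≤ (a + b * (d : ℝ)) / (Fintype.card V : ℝ) := by
  set N := ⌊κ ^ 3⌋₊
  set M := YM / p ^ N + YM / (1 - p) ^ N
  refine ⟨2 * M ^ 2 * κ ^ 5, 2 * M ^ 2 * κ ^ 5, ?_⟩
  intro V _ G hG d hreg hgrow k vc asg hsep hcov hnear σ1 σ0 hexp Y hY1 hY0 hYb
  have hclose : ∀ w, G.dist (vc (asg w)) w ≤ 2 := fun w =>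
    (hcov w).elim fun j hj => (hnear w j).trans hj
  have hloc : IsClusterLocal asg (nbhdClusters G asg) true σ1 ∧
      IsClusterLocal asg (nbhdClusters G asg) false σ0 := by
    rcases hexp with ⟨rfl, rfl⟩ | ⟨kk, rfl, rfl⟩ | ⟨q, hq, rfl, rfl⟩
    · exact ⟨fullExp_isClusterLocal G _ asg, fullExp_isClusterLocal G _ asg⟩
    · exact ⟨absExp_isClusterLocal G kk _ asg, absExp_isClusterLocal G kk _ asg⟩
    · exact ⟨fracExp_isClusterLocal G hq.2 _ asg, fracExp_isClusterLocal G hq.2 _ asg⟩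
  calc clusterVar p asg σ1 σ0 Y
      ≤ (Fintype.card V : ℝ)⁻¹ * (κ ^ 5 * (d + 1) * (2 * M ^ 2)) :=
        clusterVar_le_of_threeNet hG hreg (by linarith) hgrow hsep hclose hp hloc.1 hloc.2
          hYM.le hY1 hY0 hYb
    _ = (2 * M ^ 2 * κ ^ 5 + 2 * M ^ 2 * κ ^ 5 * d) / Fintype.card V := by
        rw [div_eq_inv_mul]; ring

end
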